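/- Let a > 0 and let (h_{m,l})_{m,l ∈ ℕ} be a family of smooth complex-valued functions on [0,∞) satisfying (a-PG). Then for any positive integers c and d, the family of functions (t ↦ t^c · h_{m,l}(t^d))_{m,l ∈ ℕ} (each of which is smooth on [0,∞)) satisfies (a/d-PG). -/

import Mathlib

open Set

/-- A family `(h_{m,l})` of functions on `[0,∞)` satisfies (a-PG) if for every `b : ℝ` and
`n : ℕ` the quantity `sup_{t ≥ 0} t^(max{(m+b)/a, 0}) · |h_{m,l}^{(n)}(t)|` is bounded by a
polynomial in `(m, l)`. -/
def PGFamily (a : ℝ) (h : ℕ → ℕ → ℝ → ℂ) : Prop :=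
  ∀ b : ℝ, ∀ n : ℕ, ∃ P : MvPolynomial (Fin 2) ℝ,
    ∀ m l : ℕ, ∀ t : ℝ, 0 ≤ t →
      t ^ (max (((m : ℝ) + b) / a) 0) * ‖iteratedDerivWithin n (h m l) (Set.Ici 0) t‖ ≤
        MvPolynomial.eval ![(m : ℝ), (l : ℝ)] P

/-- A single term `A · t^e · f^{(k)}(t^d)`; `p = (A, e, k)`. -/
noncomputable def PGterm (f : ℝ → ℂ) (d : ℕ) (p : ℝ × ℕ × ℕ) (t : ℝ) : ℂ :=
  (p.1 : ℂ) * (t : ℂ) ^ p.2.1 * iteratedDerivWithin p.2.2 f (Set.Ici 0) (t ^ d)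

/-- Differentiating a term produces these two terms. -/
def PGstep (d : ℕ) (p : ℝ × ℕ × ℕ) : List (ℝ × ℕ × ℕ) :=
  [(p.1 * p.2.1, p.2.1 - 1, p.2.2), (p.1 * d, p.2.1 + d - 1, p.2.2 + 1)]

/-- The list of terms representing the `n`-th derivative of `t^c · f(t^d)`. -/
def PGlist (c d : ℕ) : ℕ → List (ℝ × ℕ × ℕ)
  | 0 => [(1, c, 0)]
  | n + 1 => (PGlist c d n).flatMap (PGstep d)

lemma norm_list_sum_le (L : List ℂ) : ‖L.sum‖ ≤ (L.map (fun z => ‖z‖)).sum := by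
  induction L with
  | nil => simp
  | cons x L ih =>
      simp only [List.sum_cons, List.map_cons]
      exact (norm_add_le _ _).trans (by linarith)

lemma hasDerivWithinAt_iteratedDerivWithin (f : ℝ → ℂ) (hf : ContDiffOn ℝ (⊤ : ℕ∞) f (Ici 0))
    (k : ℕ) (s : ℝ) (hs : s ∈ Ici (0:ℝ)) :
    HasDerivWithinAt (iteratedDerivWithin k f (Ici 0))
      (iteratedDerivWithin (k+1) f (Ici 0) s) (Ici 0) s := by
  have h1 := (hf.differentiableOn_iteratedDerivWithin (m := k)
    (by exact_mod_cast lt_top_iff_ne_top.2 (by simp)) (uniqueDiffOn_Ici 0)) s hs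
  have h2 := h1.hasDerivWithinAt
  rwa [← iteratedDerivWithin_succ] at h2

lemma hasDerivWithinAt_PGterm (f : ℝ → ℂ) (hf : ContDiffOn ℝ (⊤ : ℕ∞) f (Ici 0)) (d : ℕ)
    (hd : 0 < d) (p : ℝ × ℕ × ℕ) (t : ℝ) (ht : t ∈ Ici (0:ℝ)) :
    HasDerivWithinAt (PGterm f d p)
      (((PGstep d p).map (fun q => PGterm f d q t)).sum) (Ici 0) t := by
  obtain ⟨A, e, k⟩ := p
  have hpow : HasDerivAt (fun y : ℝ => (A:ℂ) * (y:ℂ) ^ e)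
      ((A:ℂ) * ((e:ℂ) * (t:ℂ) ^ (e-1))) t :=
    ((hasDerivAt_pow e ((t:ℂ))).comp_ofReal).const_mul _
  have hmaps : MapsTo (fun y : ℝ => y ^ d) (Ici 0) (Ici (0:ℝ)) :=
    fun y hy => Set.mem_Ici.2 (pow_nonneg (Set.mem_Ici.1 hy) d)
  have hcomp : HasDerivWithinAt (fun y : ℝ => iteratedDerivWithin k f (Ici 0) (y ^ d))
      (((d:ℝ) * t ^ (d-1)) • iteratedDerivWithin (k+1) f (Ici 0) (t ^ d)) (Ici 0) t :=
    HasDerivWithinAt.scomp t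
      (hasDerivWithinAt_iteratedDerivWithin f hf k (t ^ d) (hmaps ht))
      ((hasDerivAt_pow d t).hasDerivWithinAt) hmaps
  have hmul := (hpow.hasDerivWithinAt).mul hcomp
  have heq : (A:ℂ) * ((e:ℂ) * (t:ℂ) ^ (e-1)) * iteratedDerivWithin k f (Ici 0) (t ^ d) +
      ((A:ℂ) * (t:ℂ) ^ e) * (((d:ℝ) * t ^ (d-1)) • iteratedDerivWithin (k+1) f (Ici 0) (t ^ d)) =
      ((PGstep d (A, e, k)).map (fun q => PGterm f d q t)).sum := by
    simp only [PGstep, PGterm, List.map_cons, List.map_nil, List.sum_cons, List.sum_nil,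
      add_zero, Complex.real_smul]
    rw [show e + d - 1 = e + (d-1) from by omega, pow_add]
    push_cast
    ring
  rw [heq] at hmul
  exact hmul

lemma hasDerivWithinAt_PGsum (f : ℝ → ℂ) (hf : ContDiffOn ℝ (⊤ : ℕ∞) f (Ici 0)) (d : ℕ)
    (hd : 0 < d) (L : List (ℝ × ℕ × ℕ)) (t : ℝ) (ht : t ∈ Ici (0:ℝ)) :
    HasDerivWithinAt (fun y => (L.map (fun q => PGterm f d q y)).sum)
      (((L.flatMap (PGstep d)).map (fun q => PGterm f d q t)).sum) (Ici 0) t := by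
  induction L with
  | nil => simpa using hasDerivWithinAt_const t (Ici (0:ℝ)) (0:ℂ)
  | cons p L ih =>
      have h1 := (hasDerivWithinAt_PGterm f hf d hd p t ht).add ih
      simp only [List.map_cons, List.sum_cons, List.flatMap_cons, List.map_append, List.sum_append]
      exact h1

lemma PG_rep (f : ℝ → ℂ) (hf : ContDiffOn ℝ (⊤ : ℕ∞) f (Ici 0)) (c d : ℕ) (hd : 0 < d) (n : ℕ) :
    ∀ t ∈ Ici (0:ℝ),
      iteratedDerivWithin n (fun y : ℝ => ((y ^ c : ℝ) : ℂ) * f (y ^ d)) (Ici 0) t =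
        ((PGlist c d n).map (fun q => PGterm f d q t)).sum := by
  induction n with
  | zero =>
      intro t ht
      simp only [iteratedDerivWithin_zero, PGlist, PGterm, List.map_cons, List.map_nil,
        List.sum_cons, List.sum_nil, add_zero, iteratedDerivWithin_zero]
      push_cast
      ring
  | succ n ih =>
      intro t ht
      rw [iteratedDerivWithin_succ]
      rw [derivWithin_congr (fun y hy => ih y hy) (ih t ht)]
      rw [(hasDerivWithinAt_PGsum f hf d hd (PGlist c d n) t ht).derivWithin
        ((uniqueDiffOn_Ici 0) t ht)]
      rfl

/-- Per-term estimate. -/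
lemma PG_term_bound (a : ℝ) (ha : 0 < a) (d : ℕ) (hd : 0 < d) (f : ℝ → ℂ) (b : ℝ) (m : ℕ)
    (A : ℝ) (e k : ℕ) (E : ℝ) (hE : (e:ℝ)/d ≤ E - |b|/a)
    (Pb Pb' : ℝ)
    (hPb : ∀ s : ℝ, 0 ≤ s →
      s ^ (max (((m:ℝ)+b)/a) 0) * ‖iteratedDerivWithin k f (Ici 0) s‖ ≤ Pb)
    (hPb' : ∀ s : ℝ, 0 ≤ s →
      s ^ (max (((m:ℝ)+(b+E*a))/a) 0) * ‖iteratedDerivWithin k f (Ici 0) s‖ ≤ Pb')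
    (hPbnn : 0 ≤ Pb) (hPb'nn : 0 ≤ Pb')
    (t : ℝ) (ht : 0 ≤ t) :
    t ^ (max (((m:ℝ)+b)/(a/d)) 0) * ‖PGterm f d (A, e, k) t‖ ≤ |A| * (Pb + Pb') := by
  have hd' : (0:ℝ) < d := by exact_mod_cast hd
  set x : ℝ := ((m:ℝ)+b)/a with hxdef
  set y : ℝ := (e:ℝ)/d with hydef
  set s : ℝ := t ^ d with hsdef
  have hs : 0 ≤ s := pow_nonneg ht d
  have hy : 0 ≤ y := by positivity
  have hxlb : -(|b|/a) ≤ x := by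
    have h1 : -|b| ≤ (m:ℝ) + b := by
      nlinarith [neg_abs_le b, (Nat.cast_nonneg m : (0:ℝ) ≤ (m:ℝ))]
    have h2 : -|b|/a ≤ ((m:ℝ)+b)/a := by gcongr
    calc -(|b|/a) = -|b|/a := by ring
      _ ≤ ((m:ℝ)+b)/a := h2
  have habd : 0 ≤ |b|/a := by positivity
  have hnorm : ‖PGterm f d (A, e, k) t‖ = |A| * (t ^ e * ‖iteratedDerivWithin k f (Ici 0) s‖) := by
    simp only [PGterm, norm_mul, Complex.norm_real, Real.norm_eq_abs, norm_pow]
    rw [abs_of_nonneg ht]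
    ring
  have hXrw : t ^ (max (((m:ℝ)+b)/(a/d)) 0) = s ^ (max x 0) := by
    have h2 : t ^ (max (((m:ℝ)+b)/(a/d)) 0) = (t ^ ((d:ℝ))) ^ (max x 0) := by
      rw [← Real.rpow_mul ht]
      congr 1
      rw [mul_max_of_nonneg _ _ hd'.le, mul_zero]
      congr 1
      rw [hxdef]
      field_simp
    rw [h2, Real.rpow_natCast]
  have htpow : (t:ℝ)^e = s ^ y := by
    have h1 : (e:ℝ) = (d:ℝ) * y := by
      rw [hydef, mul_div_cancel₀ _ (ne_of_gt hd')]
    calc (t:ℝ)^e = t ^ ((e:ℝ)) := (Real.rpow_natCast t e).symm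
      _ = t ^ ((d:ℝ) * y) := by rw [← h1]
      _ = (t ^ ((d:ℝ))) ^ y := Real.rpow_mul ht _ _
      _ = s ^ y := by rw [Real.rpow_natCast]
  rw [hnorm, hXrw, htpow]
  have hinner : s ^ (max x 0) * (s ^ y * ‖iteratedDerivWithin k f (Ici 0) s‖) ≤ Pb + Pb' := by
    rcases le_total s 1 with hs1 | hs1
    · have h1 : s ^ y ≤ 1 := Real.rpow_le_one hs hs1 hy
      have h2 : s ^ (max x 0) * (s ^ y * ‖iteratedDerivWithin k f (Ici 0) s‖) ≤
          s ^ (max x 0) * (1 * ‖iteratedDerivWithin k f (Ici 0) s‖) := by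
        nlinarith [mul_nonneg (Real.rpow_nonneg hs (max x 0))
          (norm_nonneg (iteratedDerivWithin k f (Ici 0) s)), h1]
      rw [one_mul] at h2
      exact h2.trans (by linarith [hPb s hs])
    · have hspos : (0:ℝ) < s := lt_of_lt_of_le one_pos hs1
      have hexp : max x 0 + y ≤ x + E := by
        have h1 : max x 0 ≤ x + (E - y) := max_le (by linarith) (by linarith)
        linarith
      have h2 : s ^ (max x 0) * s ^ y ≤ s ^ (x + E) := by
        rw [← Real.rpow_add hspos]
        exact Real.rpow_le_rpow_of_exponent_le hs1 hexp
      have hmax' : max (((m:ℝ)+(b+E*a))/a) 0 = x + E := by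
        have h3 : ((m:ℝ)+(b+E*a))/a = x + E := by
          rw [hxdef]; field_simp; ring
        rw [h3, max_eq_left (by linarith)]
      have h4 := hPb' s hs
      rw [hmax'] at h4
      calc s ^ (max x 0) * (s ^ y * ‖iteratedDerivWithin k f (Ici 0) s‖)
          = (s ^ (max x 0) * s ^ y) * ‖iteratedDerivWithin k f (Ici 0) s‖ := by ring
        _ ≤ s ^ (x + E) * ‖iteratedDerivWithin k f (Ici 0) s‖ :=
            mul_le_mul_of_nonneg_right h2 (norm_nonneg _)
        _ ≤ Pb' := h4
        _ ≤ Pb + Pb' := by linarith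
  calc s ^ (max x 0) * (|A| * (s ^ y * ‖iteratedDerivWithin k f (Ici 0) s‖))
      = |A| * (s ^ (max x 0) * (s ^ y * ‖iteratedDerivWithin k f (Ici 0) s‖)) := by ring
    _ ≤ |A| * (Pb + Pb') := mul_le_mul_of_nonneg_left hinner (abs_nonneg A)

theorem stmt3 (a : ℝ) (ha : 0 < a) (h : ℕ → ℕ → ℝ → ℂ)
    (hsmooth : ∀ m l : ℕ, ContDiffOn ℝ (⊤ : ℕ∞) (h m l) (Set.Ici 0))
    (hpg : PGFamily a h) (c d : ℕ) (hc : 0 < c) (hd : 0 < d) :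
    (∀ m l : ℕ, ContDiffOn ℝ (⊤ : ℕ∞)
      (fun t : ℝ => ((t ^ c : ℝ) : ℂ) * h m l (t ^ d)) (Set.Ici 0)) ∧
    PGFamily (a / d) (fun m l t => ((t ^ c : ℝ) : ℂ) * h m l (t ^ d)) := by
  have hd' : (0:ℝ) < d := by exact_mod_cast hd
  constructor
  · intro m l
    exact ContDiffOn.mul ((Complex.ofRealCLM.contDiff.comp (contDiff_id.pow c)).contDiffOn)
      ((hsmooth m l).comp ((contDiff_id.pow d)).contDiffOn (fun t ht => Set.mem_Ici.2 (pow_nonneg (Set.mem_Ici.1 ht) d)))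
  · intro b n
    classical
    set L := PGlist c d n with hLdef
    set E : ℝ := ((L.map (fun p => (p.2.1:ℝ))).sum)/d + |b|/a with hEdef
    have hQb := fun k => (hpg b k).choose_spec
    have hQb' := fun k => (hpg (b + E*a) k).choose_spec
    set Qb : ℕ → MvPolynomial (Fin 2) ℝ := fun k => (hpg b k).choose with hQbdef
    set Qb' : ℕ → MvPolynomial (Fin 2) ℝ := fun k => (hpg (b + E*a) k).choose with hQb'def
    refine ⟨(L.map (fun p => MvPolynomial.C |p.1| * (Qb p.2.2 + Qb' p.2.2))).sum, ?_⟩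
    intro m l t ht
    have hrep := PG_rep (h m l) (hsmooth m l) c d hd n t ht
    simp only at hrep ⊢
    rw [hrep]
    have hT : 0 ≤ t ^ (max (((m:ℝ)+b)/(a/d)) 0) := Real.rpow_nonneg ht _
    have hevalnn : ∀ Q : MvPolynomial (Fin 2) ℝ,
        (∀ m' l' : ℕ, ∀ s : ℝ, 0 ≤ s →
          s ^ (max (((m':ℝ)+b)/a) 0) * ‖iteratedDerivWithin 0 (h m' l') (Set.Ici 0) s‖ ≤
            MvPolynomial.eval ![(m':ℝ), (l':ℝ)] Q) → True := fun _ _ => trivial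
    calc t ^ (max (((m:ℝ)+b)/(a/d)) 0) *
          ‖((L.map (fun q => PGterm (h m l) d q t)).sum)‖
        ≤ t ^ (max (((m:ℝ)+b)/(a/d)) 0) *
          ((L.map (fun q => ‖PGterm (h m l) d q t‖)).sum) := by
          have hns := norm_list_sum_le (L.map (fun q => PGterm (h m l) d q t))
          rw [List.map_map] at hns
          exact mul_le_mul_of_nonneg_left hns hT
      _ = (L.map (fun q => t ^ (max (((m:ℝ)+b)/(a/d)) 0) * ‖PGterm (h m l) d q t‖)).sum := by
          rw [List.sum_map_mul_left]
      _ ≤ (L.map (fun q => |q.1| * (MvPolynomial.eval ![(m:ℝ), (l:ℝ)] (Qb q.2.2) +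
            MvPolynomial.eval ![(m:ℝ), (l:ℝ)] (Qb' q.2.2)))).sum := by
          apply List.sum_le_sum
          intro p hp
          have hpE : ((p.2.1:ℝ))/d ≤ E - |b|/a := by
            rw [hEdef]
            have hmem : ((p.2.1:ℝ)) ∈ L.map (fun q => ((q.2.1:ℝ))) :=
              List.mem_map_of_mem (f := fun q => ((q.2.1:ℝ))) hp
            have hle : ((p.2.1:ℝ)) ≤ (L.map (fun q => ((q.2.1:ℝ)))).sum :=
              List.single_le_sum (fun x hx => by
                obtain ⟨q, _, rfl⟩ := List.mem_map.1 hx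
                positivity) _ hmem
            have : ((p.2.1:ℝ))/d ≤ (L.map (fun q => ((q.2.1:ℝ)))).sum / d := by gcongr
            linarith
          have hbnn : 0 ≤ MvPolynomial.eval ![(m:ℝ), (l:ℝ)] (Qb p.2.2) :=
            le_trans (by positivity) (hQb p.2.2 m l 0 le_rfl)
          have hbnn' : 0 ≤ MvPolynomial.eval ![(m:ℝ), (l:ℝ)] (Qb' p.2.2) :=
            le_trans (by positivity) (hQb' p.2.2 m l 0 le_rfl)
          have := PG_term_bound a ha d hd (h m l) b m p.1 p.2.1 p.2.2 E hpE
            (MvPolynomial.eval ![(m:ℝ), (l:ℝ)] (Qb p.2.2))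
            (MvPolynomial.eval ![(m:ℝ), (l:ℝ)] (Qb' p.2.2))
            (fun s hs => hQb p.2.2 m l s hs)
            (fun s hs => hQb' p.2.2 m l s hs)
            hbnn hbnn' t ht
          exact this
      _ = MvPolynomial.eval ![(m:ℝ), (l:ℝ)]
            ((L.map (fun p => MvPolynomial.C |p.1| * (Qb p.2.2 + Qb' p.2.2))).sum) := by
          rw [map_list_sum, List.map_map]
          congr 1
          ext p
          simp [MvPolynomial.eval_C]
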